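/- Let n ≥ 1 and k ∈ {0,…,n}. Define the set Bound(k,n) of bounded affine permutations: bijections f : ℤ → ℤ with f(i+n) = f(i) + n for all i, (1/n)·Σ_{i=1}^n (f(i) − i) = k, and i ≤ f(i) ≤ i + n for all i. For f ∈ Bound(k,n) and a ∈ ℤ, define I_a := {f(i) : i < a, f(i) ≥ a}. Then I_a is a k-element subset of the interval [a, a+n) = {a, a+1, …, a+n−1}. -/

import Mathlib

/-!
Let `T a` be the set of `i < a` with `f i ≥ a`, so that `I_a = f '' T a`. Passing from `a` to
`a + 1`, the position `a` enters `T` (unless `f a = a`) and `f⁻¹ a` leaves it (unless it is `a`),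
so `#T a` is independent of `a`. Counting the pairs `i < b ≤ f i` modulo the shift
`(i, b) ↦ (i + n, b + n)` once over `i ∈ [1, n]` and once over `b ∈ [1, n]` gives
`∑_{i=1}^n (f i - i) = ∑_{b=1}^n #T b = n · #T a`, hence `#T a = k`.
-/

open Set

namespace GrassmannNecklace

variable {n : ℕ} {f : ℤ → ℤ}

/-- The positions `i < a ≤ f i`; for `f i ≤ i + n` they all lie in the window `[a - n, a)`. -/
noncomputable def crossings (n : ℕ) (f : ℤ → ℤ) (a : ℤ) : Finset ℤ :=
  (Finset.Ico (a - n) a).filter fun i => a ≤ f i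

theorem mem_crossings (hle : ∀ i, f i ≤ i + n) {a i : ℤ} :
    i ∈ crossings n f a ↔ i < a ∧ a ≤ f i := by
  simp only [crossings, Finset.mem_filter, Finset.mem_Ico]
  have := hle i
  constructor
  · rintro ⟨⟨-, hia⟩, hai⟩
    exact ⟨hia, hai⟩
  · rintro ⟨hia, hai⟩
    exact ⟨⟨by omega, hia⟩, hai⟩

theorem card_crossings_add_one (hf : Function.Bijective f)
    (hbound : ∀ i, i ≤ f i ∧ f i ≤ i + n) (a : ℤ) :
    (crossings n f (a + 1)).card = (crossings n f a).card := by
  have hle : ∀ i, f i ≤ i + n := fun i => (hbound i).2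
  obtain ⟨b, hb⟩ := hf.2 a
  have hb_le : b ≤ a := hb ▸ (hbound b).1
  -- both sides are the set of `i ≤ a ≤ f i`
  have hinsert : insert b (crossings n f (a + 1)) = insert a (crossings n f a) := by
    ext i
    simp only [Finset.mem_insert, mem_crossings hle]
    have := (hbound i).1
    have hfa := (hbound a).1
    by_cases hfi : f i = a
    · have : i = b := hf.1 (hfi.trans hb.symm)
      omega
    · have : i ≠ b := fun h => hfi (h ▸ hb)
      omega
  have hb_notMem : b ∉ crossings n f (a + 1) := by
    rw [mem_crossings hle]
    omega
  have ha_notMem : a ∉ crossings n f a := by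
    rw [mem_crossings hle]
    omega
  have := congrArg Finset.card hinsert
  rwa [Finset.card_insert_of_notMem hb_notMem, Finset.card_insert_of_notMem ha_notMem,
    Nat.add_right_cancel_iff] at this

theorem card_crossings_eq (hf : Function.Bijective f)
    (hbound : ∀ i, i ≤ f i ∧ f i ≤ i + n) (a b : ℤ) :
    (crossings n f a).card = (crossings n f b).card := by
  have hperiodic : Function.Periodic (fun a => (crossings n f a).card) 1 :=
    card_crossings_add_one hf hbound
  simpa using (hperiodic.int_mul_eq a).trans (hperiodic.int_mul_eq b).symm

theorem card_sigma_crossings (hper : ∀ i, f (i + n) = f i + n)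
    (hbound : ∀ i, i ≤ f i ∧ f i ≤ i + n) :
    ((Finset.Icc (1 : ℤ) n).sigma (crossings n f)).card =
      ((Finset.Icc (1 : ℤ) n).sigma fun i => Finset.Ioc i (f i)).card := by
  have hle : ∀ i, f i ≤ i + n := fun i => (hbound i).2
  have hper' : ∀ i, f (i - n) = f i - n := fun i => by
    have := hper (i - n)
    rw [sub_add_cancel] at this
    omega
  -- a pair `i < b ≤ f i` is moved into the other fundamental domain by the shift `-n` or `+n`
  refine Finset.card_nbij'
    (fun p => if 0 < p.2 then ⟨p.2, p.1⟩ else ⟨p.2 + n, p.1 + n⟩)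
    (fun p => if p.2 ≤ n then ⟨p.2, p.1⟩ else ⟨p.2 - n, p.1 - n⟩) ?_ ?_ ?_ ?_
  · rintro ⟨b, i⟩ hp
    simp only [Finset.coe_sigma, Set.mem_sigma_iff, Finset.mem_coe, Finset.mem_Icc,
      Finset.mem_Ioc, mem_crossings hle] at hp ⊢
    have := hbound i
    split_ifs <;> simp only [hper] <;> omega
  · rintro ⟨i, b⟩ hp
    simp only [Finset.coe_sigma, Set.mem_sigma_iff, Finset.mem_coe, Finset.mem_Icc,
      Finset.mem_Ioc, mem_crossings hle] at hp ⊢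
    have := hbound i
    split_ifs <;> simp only [hper'] <;> omega
  · rintro ⟨b, i⟩ hp
    simp only [Finset.coe_sigma, Set.mem_sigma_iff, Finset.mem_coe, Finset.mem_Icc,
      mem_crossings hle] at hp
    dsimp only
    split_ifs with h₁ h₂ h₂ <;> simp only [Sigma.mk.injEq, heq_eq_eq] at h₁ h₂ ⊢ <;> omega
  · rintro ⟨i, b⟩ hp
    simp only [Finset.coe_sigma, Set.mem_sigma_iff, Finset.mem_coe, Finset.mem_Icc,
      Finset.mem_Ioc] at hp
    have := hbound i
    dsimp only
    split_ifs with h₁ h₂ h₂ <;> simp only [Sigma.mk.injEq, heq_eq_eq] at h₁ h₂ ⊢ <;> omega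

theorem sum_card_crossings (hper : ∀ i, f (i + n) = f i + n)
    (hbound : ∀ i, i ≤ f i ∧ f i ≤ i + n) :
    ∑ a ∈ Finset.Icc (1 : ℤ) n, ((crossings n f a).card : ℤ) =
      ∑ i ∈ Finset.Icc (1 : ℤ) n, (f i - i) := by
  have hcard_Ioc : ∀ i, ((Finset.Ioc i (f i)).card : ℤ) = f i - i := fun i => by
    rw [Int.card_Ioc, Int.toNat_of_nonneg (sub_nonneg.mpr (hbound i).1)]
  simp_rw [← hcard_Ioc]
  exact_mod_cast by simpa only [Finset.card_sigma] using card_sigma_crossings hper hbound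

theorem card_crossings {k : ℕ} (hn : 1 ≤ n) (hf : Function.Bijective f)
    (hper : ∀ i, f (i + n) = f i + n)
    (hav : ∑ i ∈ Finset.Icc (1 : ℤ) n, (f i - i) = (k : ℤ) * n)
    (hbound : ∀ i, i ≤ f i ∧ f i ≤ i + n) (a : ℤ) :
    (crossings n f a).card = k := by
  have hsum := sum_card_crossings hper hbound
  rw [Finset.sum_congr rfl fun b _ => congrArg Nat.cast (card_crossings_eq hf hbound b a),
    Finset.sum_const, Int.card_Icc, add_sub_cancel_right, Int.toNat_natCast, nsmul_eq_mul,
    hav, mul_comm] at hsum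
  exact_mod_cast mul_right_cancel₀ (by positivity) hsum

end GrassmannNecklace

theorem grassmann_necklace_card_and_subset_general
    (n k : ℕ) (hn : 1 ≤ n)
    (f : ℤ → ℤ) (hbij : Function.Bijective f)
    (hper : ∀ i : ℤ, f (i + n) = f i + n)
    (hav : ∑ i ∈ Finset.Icc (1 : ℤ) (n : ℤ), (f i - i) = (k : ℤ) * n)
    (hbound : ∀ i : ℤ, i ≤ f i ∧ f i ≤ i + n)
    (a : ℤ) :
    {j : ℤ | ∃ i : ℤ, i < a ∧ a ≤ f i ∧ f i = j}.Finite ∧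
    {j : ℤ | ∃ i : ℤ, i < a ∧ a ≤ f i ∧ f i = j}.ncard = k ∧
    {j : ℤ | ∃ i : ℤ, i < a ∧ a ≤ f i ∧ f i = j} ⊆ Ico a (a + n) := by
  have hset : {j : ℤ | ∃ i : ℤ, i < a ∧ a ≤ f i ∧ f i = j} =
      ((GrassmannNecklace.crossings n f a).image f : Set ℤ) := by
    ext j
    simp [GrassmannNecklace.mem_crossings fun i => (hbound i).2, and_assoc]
  refine ⟨hset ▸ Finset.finite_toSet _, ?_, ?_⟩
  · rw [hset, ncard_coe_finset, Finset.card_image_of_injective _ hbij.1,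
      GrassmannNecklace.card_crossings hn hbij hper hav hbound]
  · rintro j ⟨i, hia, hai, rfl⟩
    have := (hbound i).2
    exact ⟨hai, by omega⟩

/-- For a bounded affine permutation `f ∈ Bound(k,n)` and any `a ∈ ℤ`, the Grassmann
necklace term `I_a = {f(i) : i < a, f(i) ≥ a}` is a `k`-element subset of `[a, a+n)`. -/
theorem grassmann_necklace_card_and_subset
    (n k : ℕ) (hn : 1 ≤ n) (hk : k ≤ n)
    (f : ℤ → ℤ) (hbij : Function.Bijective f)
    (hper : ∀ i : ℤ, f (i + n) = f i + n)
    (hav : ∑ i ∈ Finset.Icc (1 : ℤ) (n : ℤ), (f i - i) = (k : ℤ) * n)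
    (hbound : ∀ i : ℤ, i ≤ f i ∧ f i ≤ i + n)
    (a : ℤ) :
    {j : ℤ | ∃ i : ℤ, i < a ∧ a ≤ f i ∧ f i = j}.Finite ∧
    {j : ℤ | ∃ i : ℤ, i < a ∧ a ≤ f i ∧ f i = j}.ncard = k ∧
    {j : ℤ | ∃ i : ℤ, i < a ∧ a ≤ f i ∧ f i = j} ⊆ Ico a (a + n) :=
  grassmann_necklace_card_and_subset_general n k hn f hbij hper hav hbound a
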